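/- Let φ : ∂Ω₁ → ∂Ω₂ be the map defined by φ(x,y) = (x,y) if (x,y) ∈ ∂Ω₁ ∩ ∂((−1,1)²), and φ(x,y) = (2−x, y) otherwise. For every t ∈ (0,1) and every L ≥ 0, if h : Ω̄₁ → ℝ² satisfies h(Ω̄₁) ⊆ Ω̄₂, h = φ on ∂Ω₁, and |h(x) − h(y)| ≤ L|x − y| for all x, y ∈ Ω̄₁, then L ≥ √(1 + t²)/t. In particular, φ admits no Lipschitz extension h : Ω̄₁ → Ω̄₂. -/

import Mathlib

/-!
On the vertical segment `{2 - t} × [-t², t²]` of the outward cusp of `Ω₁` the endpoints lie on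
`∂Ω₁`, so an extension `h` of `φ` sends them to `(t, ±t²)`. By the intermediate value theorem the
second coordinate of `h` vanishes at some point `s` of the segment; since the inward cusp keeps `Ω̄₂`
off the positive `x`-axis, `h s` lies on the closed negative `x`-axis. The endpoint nearer to
`s` is at distance at most `t²` from it, while its image is at distance at least `t √(1 + t²)`
from `h s`. Letting `t → 0` rules out every Lipschitz constant.
-/

open Set Metric

/-- A point of the plane with given coordinates. -/
noncomputable def mk2 (x y : ℝ) : EuclideanSpace ℝ (Fin 2) :=
  (WithLp.equiv 2 (Fin 2 → ℝ)).symm ![x, y]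

/-- The open square `(-1, 1)²`. -/
def SquareSet : Set (EuclideanSpace ℝ (Fin 2)) :=
  {z | z 0 ∈ Set.Ioo (-1:ℝ) 1 ∧ z 1 ∈ Set.Ioo (-1:ℝ) 1}

/-- `Ω₁`: the square with an outward cusp attached. -/
def Omega1 : Set (EuclideanSpace ℝ (Fin 2)) :=
  SquareSet ∪ {z | 1 ≤ z 0 ∧ z 0 < 2 ∧ |z 1| < (2 - z 0) ^ 2}

/-- `Ω₂`: the square with a closed inward cusp removed. -/
def Omega2 : Set (EuclideanSpace ℝ (Fin 2)) :=
  SquareSet \ {z | 0 ≤ z 0 ∧ z 0 ≤ 1 ∧ |z 1| ≤ (z 0) ^ 2}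

open Classical in
/-- The boundary map: identity on `∂Ω₁ ∩ ∂((-1,1)²)`, reflection `x ↦ 2 - x` elsewhere. -/
noncomputable def phiMap (z : EuclideanSpace ℝ (Fin 2)) : EuclideanSpace ℝ (Fin 2) :=
  if z ∈ frontier Omega1 ∩ frontier SquareSet then z else mk2 (2 - z 0) (z 1)

open Filter Topology

@[simp] lemma mk2_zero (x y : ℝ) : mk2 x y 0 = x := rfl

@[simp] lemma mk2_one (x y : ℝ) : mk2 x y 1 = y := rfl

lemma dist_eq_sqrt_coord (z w : EuclideanSpace ℝ (Fin 2)) :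
    dist z w = √((z 0 - w 0) ^ 2 + (z 1 - w 1) ^ 2) := by
  simp [EuclideanSpace.dist_eq, Fin.sum_univ_two, Real.dist_eq, sq_abs]

lemma isometry_mk2 (a : ℝ) : Isometry (mk2 a) :=
  Isometry.of_dist_eq fun u v => by
    simp [dist_eq_sqrt_coord, Real.dist_eq, Real.sqrt_sq_eq_abs]

lemma closure_squareSet_subset : closure SquareSet ⊆ {z | z 0 ≤ 1} :=
  closure_minimal (fun _ hz => hz.1.2.le) (isClosed_le (by fun_prop) continuous_const)

lemma closure_omega2_subset : closure Omega2 ⊆ {z | z 0 ≤ 0 ∨ z 0 ^ 2 ≤ |z 1|} := by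
  refine closure_minimal ?_ <| ofPred_or ▸
    (isClosed_le (by fun_prop) continuous_const).union (isClosed_le (by fun_prop) (by fun_prop))
  rintro z ⟨⟨⟨-, hz0⟩, -⟩, hcusp⟩
  rw [mem_ofPred_eq]
  by_contra! h
  exact hcusp ⟨h.1.le, hz0.le, h.2.le⟩

lemma fst_nonpos_of_mem_closure_omega2 {w : EuclideanSpace ℝ (Fin 2)} (hw : w ∈ closure Omega2)
    (h1 : w 1 = 0) : w 0 ≤ 0 := by
  by_contra! hpos
  have hsq := (closure_omega2_subset hw).resolve_left hpos.not_ge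
  rw [h1, abs_zero] at hsq
  exact (pow_pos hpos 2).not_ge hsq

section CuspSegment

variable {t u : ℝ}

lemma mk2_mem_closure_omega1 (ht0 : 0 < t) (ht1 : t < 1) (hu : |u| ≤ t ^ 2) :
    mk2 (2 - t) u ∈ closure Omega1 := by
  have hlim : Tendsto (fun s => mk2 (2 - t) (s * u)) (𝓝[<] 1) (𝓝 (mk2 (2 - t) u)) := by
    refine (Continuous.tendsto' ?_ 1 _ ?_).mono_left nhdsWithin_le_nhds
    · exact (isometry_mk2 (2 - t)).continuous.comp (continuous_mul_const u)
    · rw [one_mul]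
  refine mem_closure_of_tendsto hlim ?_
  filter_upwards [Ioo_mem_nhdsLT (zero_lt_one' ℝ)] with s ⟨hs0, hs1⟩
  refine Or.inr ⟨show 1 ≤ 2 - t by linarith, show 2 - t < 2 by linarith, ?_⟩
  simp only [mk2_zero, mk2_one, sub_sub_cancel, abs_mul, abs_of_pos hs0]
  calc s * |u| ≤ s * t ^ 2 := by gcongr
    _ < t ^ 2 := by nlinarith [pow_pos ht0 2]

lemma mk2_mem_frontier_omega1 (ht0 : 0 < t) (ht1 : t < 1) (hu : |u| = t ^ 2) :
    mk2 (2 - t) u ∈ frontier Omega1 := by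
  refine ⟨mk2_mem_closure_omega1 ht0 ht1 hu.le, fun hint => ?_⟩
  rcases interior_subset hint with hsq | ⟨-, -, hcusp⟩
  · have : 2 - t < 1 := hsq.1.2
    linarith
  · simp only [mk2_zero, mk2_one, sub_sub_cancel] at hcusp
    exact hcusp.ne hu

lemma phiMap_mk2 (ht1 : t < 1) : phiMap (mk2 (2 - t) u) = mk2 t u := by
  have hout : mk2 (2 - t) u ∉ closure SquareSet := fun h => by
    have : 2 - t ≤ 1 := closure_squareSet_subset h
    linarith
  rw [phiMap, if_neg fun h => hout (frontier_subset_closure h.2)]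
  simp

end CuspSegment

section Extension

variable {t L : ℝ} {h : EuclideanSpace ℝ (Fin 2) → EuclideanSpace ℝ (Fin 2)}

lemma exists_mem_Icc_snd_eq_zero (ht0 : 0 < t) (ht1 : t < 1)
    (hcont : ContinuousOn h (closure Omega1)) (hbd : ∀ x ∈ frontier Omega1, h x = phiMap x) :
    ∃ u ∈ Icc (-t ^ 2) (t ^ 2), h (mk2 (2 - t) u) 1 = 0 := by
  have hseg : MapsTo (mk2 (2 - t)) (Icc (-t ^ 2) (t ^ 2)) (closure Omega1) := fun u hu =>
    mk2_mem_closure_omega1 ht0 ht1 (abs_le.mpr hu)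
  have hg : ContinuousOn (fun u => h (mk2 (2 - t) u) 1) (Icc (-t ^ 2) (t ^ 2)) :=
    (by fun_prop : Continuous fun z : EuclideanSpace ℝ (Fin 2) => z 1).comp_continuousOn
      (hcont.comp (isometry_mk2 (2 - t)).continuous.continuousOn hseg)
  have hend : ∀ c, |c| = t ^ 2 → h (mk2 (2 - t) c) 1 = c := fun c hc => by
    rw [hbd _ (mk2_mem_frontier_omega1 ht0 ht1 hc), phiMap_mk2 ht1, mk2_one]
  have ht2 : 0 < t ^ 2 := pow_pos ht0 2
  refine intermediate_value_Icc (by linarith) hg ?_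
  rw [hend _ ((abs_neg _).trans (abs_of_pos ht2)), hend _ (abs_of_pos ht2)]
  exact ⟨by linarith, ht2.le⟩

lemma sqrt_one_add_sq_div_le_of_extension (ht0 : 0 < t) (ht1 : t < 1) (hL : 0 ≤ L)
    (hrange : ∀ x ∈ closure Omega1, h x ∈ closure Omega2)
    (hbd : ∀ x ∈ frontier Omega1, h x = phiMap x)
    (hlip : ∀ x ∈ closure Omega1, ∀ y ∈ closure Omega1, dist (h x) (h y) ≤ L * dist x y) :
    √(1 + t ^ 2) / t ≤ L := by
  have hcont : ContinuousOn h (closure Omega1) := (LipschitzOnWith.of_dist_le' hlip).continuousOn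
  obtain ⟨u, hu, hzero⟩ := exists_mem_Icc_snd_eq_zero ht0 ht1 hcont hbd
  have hneg : h (mk2 (2 - t) u) 0 ≤ 0 :=
    fst_nonpos_of_mem_closure_omega2
      (hrange _ (mk2_mem_closure_omega1 ht0 ht1 (abs_le.mpr hu))) hzero
  obtain ⟨c, hc, hcu⟩ : ∃ c, |c| = t ^ 2 ∧ |c - u| ≤ t ^ 2 := by
    rcases le_total 0 u with h0 | h0
    · exact ⟨t ^ 2, abs_of_nonneg (sq_nonneg t), by rw [abs_le]; constructor <;> linarith [hu.2]⟩
    · exact ⟨-t ^ 2, by rw [abs_neg, abs_of_nonneg (sq_nonneg t)],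
        by rw [abs_le]; constructor <;> linarith [hu.1]⟩
  have hlow : t * √(1 + t ^ 2) ≤ dist (h (mk2 (2 - t) c)) (h (mk2 (2 - t) u)) := by
    have hsqrt : t * √(1 + t ^ 2) = √(t ^ 2 * (1 + t ^ 2)) := by
      rw [Real.sqrt_mul (sq_nonneg t), Real.sqrt_sq ht0.le]
    rw [hbd _ (mk2_mem_frontier_omega1 ht0 ht1 hc), phiMap_mk2 ht1, dist_eq_sqrt_coord, mk2_zero,
      mk2_one, hzero, hsqrt]
    have hc2 : c ^ 2 = t ^ 2 * t ^ 2 := by rw [← sq_abs, hc, sq]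
    exact Real.sqrt_le_sqrt (by nlinarith)
  have hup : dist (mk2 (2 - t) c) (mk2 (2 - t) u) ≤ t ^ 2 := by
    rwa [(isometry_mk2 (2 - t)).dist_eq, Real.dist_eq]
  have key : t * √(1 + t ^ 2) ≤ t * (L * t) := calc
    t * √(1 + t ^ 2) ≤ dist (h (mk2 (2 - t) c)) (h (mk2 (2 - t) u)) := hlow
    _ ≤ L * dist (mk2 (2 - t) c) (mk2 (2 - t) u) :=
      hlip _ (mk2_mem_closure_omega1 ht0 ht1 hc.le) _
        (mk2_mem_closure_omega1 ht0 ht1 (abs_le.mpr hu))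
    _ ≤ L * t ^ 2 := by gcongr
    _ = t * (L * t) := by ring
  rw [div_le_iff₀ ht0]
  exact le_of_mul_le_mul_left key ht0

end Extension

/-- Any Lipschitz map `h : Ω̄₁ → Ω̄₂` extending `phiMap` has Lipschitz
constant at least `√(1 + t²)/t` for every `t ∈ (0,1)`; in particular `phiMap` admits
no Lipschitz extension. -/
theorem lipschitz_constant_lower_bound :
    (∀ t ∈ Set.Ioo (0:ℝ) 1, ∀ L : ℝ, 0 ≤ L →
      ∀ h : EuclideanSpace ℝ (Fin 2) → EuclideanSpace ℝ (Fin 2),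
        (∀ x ∈ closure Omega1, h x ∈ closure Omega2) →
        (∀ x ∈ frontier Omega1, h x = phiMap x) →
        (∀ x ∈ closure Omega1, ∀ y ∈ closure Omega1,
          dist (h x) (h y) ≤ L * dist x y) →
        Real.sqrt (1 + t ^ 2) / t ≤ L) ∧
    ¬ ∃ (h : EuclideanSpace ℝ (Fin 2) → EuclideanSpace ℝ (Fin 2)) (L : ℝ), 0 ≤ L ∧
        (∀ x ∈ closure Omega1, h x ∈ closure Omega2) ∧
        (∀ x ∈ frontier Omega1, h x = phiMap x) ∧
        (∀ x ∈ closure Omega1, ∀ y ∈ closure Omega1,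
          dist (h x) (h y) ≤ L * dist x y) := by
  refine ⟨fun t ht L hL h hrange hbd hlip =>
    sqrt_one_add_sq_div_le_of_extension ht.1 ht.2 hL hrange hbd hlip, ?_⟩
  rintro ⟨h, L, hL, hrange, hbd, hlip⟩
  have hpos : 0 < L + 2 := by linarith
  have hbound := sqrt_one_add_sq_div_le_of_extension (inv_pos.2 hpos)
    (inv_lt_one_of_one_lt₀ (by linarith)) hL hrange hbd hlip
  have hblowup : L + 2 ≤ √(1 + (L + 2)⁻¹ ^ 2) / (L + 2)⁻¹ := by
    rw [div_inv_eq_mul]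
    exact le_mul_of_one_le_left hpos.le (Real.one_le_sqrt.2 (le_add_of_nonneg_right (sq_nonneg _)))
  linarith
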